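/- Let ρ ∈ M_A ⊗ M_A be a positive semidefinite matrix. The following are each equivalent to ρ being separable (ρ ∈ S_1): (1) (ψ ⊗ 1_A)(ρ) ∈ S_1 for every completely positive ψ: M_A → M_A; (2) (1_A ⊗ σ*)(ρ) is positive semidefinite for every positive map σ: M_A → M_A; (3) (1_A ⊗ ψ)(ρ) ∈ S_1 for every completely positive ψ: M_A → M_A; (4) (σ ⊗ 1_A)(ρ) is positive semidefinite for every positive map σ: M_A → M_A. -/

import Mathlib

open Matrix Finset
open scoped ComplexOrder Kronecker

/-- The algebra of `n × n` complex matrices. -/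
abbrev Mat (n : ℕ) := Matrix (Fin n) (Fin n) ℂ

/-- Linear maps between matrix algebras. -/
abbrev MMap (m n : ℕ) := Mat m →ₗ[ℂ] Mat n

/-- The bilinear pairing `⟨a,b⟩ = Tr(aᵀ b)`. -/
noncomputable def mpair {ι : Type*} [Fintype ι] (x y : Matrix ι ι ℂ) : ℂ :=
  (xᵀ * y).trace

/-- The Choi matrix `C_φ = Σ_{i,j} e_{ij} ⊗ φ(e_{ij})`. -/
noncomputable def choi {m n : ℕ} (φ : MMap m n) :
    Matrix (Fin m × Fin n) (Fin m × Fin n) ℂ :=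
  Matrix.of fun p q => φ (Matrix.single p.1 q.1 1) p.2 q.2

/-- The pairing on maps `⟨φ,ψ⟩ = ⟨C_φ, C_ψ⟩`. -/
noncomputable def mapPair {m n : ℕ} (φ ψ : MMap m n) : ℂ := mpair (choi φ) (choi ψ)

/-- The adjoint `φ*` with respect to the pairing `⟨a,b⟩ = Tr(aᵀ b)`:
it satisfies `⟨φ(a),b⟩ = ⟨a,φ*(b)⟩`. -/
noncomputable def adjMap {m n : ℕ} (φ : MMap m n) : MMap n m where
  toFun y := Matrix.of fun i j => mpair (φ (Matrix.single i j 1)) y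
  map_add' y z := by
    ext i j
    simp [mpair, Matrix.mul_add]
  map_smul' c y := by
    ext i j
    simp [mpair, Matrix.mul_smul]

/-- Hermitian-preserving maps: `φ(a*) = φ(a)*`. -/
def IsHermP {m n : ℕ} (φ : MMap m n) : Prop := ∀ x : Mat m, φ xᴴ = (φ x)ᴴ

/-- The real vector space `H(M_A,M_B)` of Hermitian-preserving maps, as a set. -/
def HermSet (m n : ℕ) : Set (MMap m n) := {φ | IsHermP φ}

/-- Positive maps: mapping positive semidefinite matrices to positive semidefinite ones. -/
def IsPosMap {m n : ℕ} (φ : MMap m n) : Prop :=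
  ∀ x : Mat m, x.PosSemidef → (φ x).PosSemidef

/-- Completely positive maps: those whose Choi matrix is positive semidefinite. -/
def IsCP {m n : ℕ} (φ : MMap m n) : Prop := (choi φ).PosSemidef

/-- The cone `CP` of completely positive maps. -/
def CPset (m n : ℕ) : Set (MMap m n) := {φ | IsCP φ}

/-- `K₁ ∘ K₀ = {φ₁ ∘ φ₀ : φ₁ ∈ K₁, φ₀ ∈ K₀}`. -/
def compSet {m n p : ℕ} (K1 : Set (MMap n p)) (K0 : Set (MMap m n)) : Set (MMap m p) :=
  {χ | ∃ φ₁ ∈ K1, ∃ φ₀ ∈ K0, χ = φ₁ ∘ₗ φ₀}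

/-- `K₂ ∘ K₁ ∘ K₀ = {φ₂ ∘ φ₁ ∘ φ₀ : φᵢ ∈ Kᵢ}`. -/
def comp3 {m n p q : ℕ} (K2 : Set (MMap p q)) (K1 : Set (MMap n p)) (K0 : Set (MMap m n)) :
    Set (MMap m q) :=
  {χ | ∃ φ₂ ∈ K2, ∃ φ₁ ∈ K1, ∃ φ₀ ∈ K0, χ = φ₂ ∘ₗ φ₁ ∘ₗ φ₀}

/-- The dual cone `K° = {ψ ∈ H(M_A,M_B) : ⟨φ,ψ⟩ ≥ 0 for all φ ∈ K}`. -/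
def dualCone {m n : ℕ} (K : Set (MMap m n)) : Set (MMap m n) :=
  {ψ | IsHermP ψ ∧ ∀ φ ∈ K, 0 ≤ mapPair φ ψ}

/-- `K* = {φ* : φ ∈ K}`. -/
noncomputable def starSet {m n : ℕ} (K : Set (MMap m n)) : Set (MMap n m) := adjMap '' K

/-- `K^⊳ = (K ∘ CP_A)°`. -/
def rdualSet {m n : ℕ} (K : Set (MMap m n)) : Set (MMap m n) :=
  dualCone (compSet K (CPset m m))

/-- `K^⊲ = (CP_B ∘ K)°`. -/
def ldualSet {m n : ℕ} (K : Set (MMap m n)) : Set (MMap m n) :=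
  dualCone (compSet (CPset n n) K)

/-- A convex cone of maps: closed under addition and nonnegative real scaling. -/
def IsConeSet {m n : ℕ} (K : Set (MMap m n)) : Prop :=
  (∀ φ ∈ K, ∀ ψ ∈ K, φ + ψ ∈ K) ∧ (∀ φ ∈ K, ∀ r : ℝ, 0 ≤ r → (r : ℂ) • φ ∈ K)

/-- A closed convex cone of maps (closedness via the Choi isomorphism). -/
def IsClosedConeSet {m n : ℕ} (K : Set (MMap m n)) : Prop :=
  IsConeSet K ∧ IsClosed (choi '' K)

/-- Ampliation `1_Z ⊗ σ : M_Z ⊗ M_X → M_Z ⊗ M_Y`. -/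
def idTensor {z x y : ℕ} (σ : MMap x y)
    (M : Matrix (Fin z × Fin x) (Fin z × Fin x) ℂ) :
    Matrix (Fin z × Fin y) (Fin z × Fin y) ℂ :=
  Matrix.of fun p q => σ (Matrix.of fun k l => M (p.1, k) (q.1, l)) p.2 q.2

/-- Ampliation `σ ⊗ 1_Z : M_X ⊗ M_Z → M_Y ⊗ M_Z`. -/
def tensorId {x y z : ℕ} (σ : MMap x y)
    (M : Matrix (Fin x × Fin z) (Fin x × Fin z) ℂ) :
    Matrix (Fin y × Fin z) (Fin y × Fin z) ℂ :=
  Matrix.of fun p q => σ (Matrix.of fun i j => M (i, p.2) (j, q.2)) p.1 q.1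

/-- `S_1`: the closed convex cone generated by `x ⊗ y` with `x, y` positive semidefinite. -/
def SepCone (m n : ℕ) : Set (Matrix (Fin m × Fin n) (Fin m × Fin n) ℂ) :=
  closure {X | ∃ (r : ℕ) (x : Fin r → Mat m) (y : Fin r → Mat n),
    (∀ i, (x i).PosSemidef ∧ (y i).PosSemidef) ∧ X = ∑ i, x i ⊗ₖ y i}

/-- `SP_1`: Hermitian-preserving maps with separable Choi matrix. -/
def SP1set (m n : ℕ) : Set (MMap m n) := {φ | IsHermP φ ∧ choi φ ∈ SepCone m n}


/-- Vectors of Schmidt rank at most `k`. -/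
def SchmidtRankLE (k : ℕ) {m n : ℕ} (ξ : Fin m × Fin n → ℂ) : Prop :=
  ∃ (u : Fin k → Fin m → ℂ) (v : Fin k → Fin n → ℂ),
    ξ = fun p => ∑ i, u i p.1 * v i p.2

/-- `k`-blockpositive matrices: `⟨Y, |ξ⟩⟨ξ|⟩ ≥ 0` for every `ξ` of Schmidt rank at most `k`. -/
def BlockPos (k : ℕ) {m n : ℕ} (Y : Matrix (Fin m × Fin n) (Fin m × Fin n) ℂ) : Prop :=
  ∀ ξ : Fin m × Fin n → ℂ, SchmidtRankLE k ξ →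
    0 ≤ mpair Y (Matrix.of fun p q => ξ p * star (ξ q))

/-- `S_k`: the closed convex cone generated by `|ξ⟩⟨ξ|` for `ξ` of Schmidt rank at most `k`. -/
def SchmidtCone (k m n : ℕ) : Set (Matrix (Fin m × Fin n) (Fin m × Fin n) ℂ) :=
  closure {X | ∃ (r : ℕ) (ξ : Fin r → Fin m × Fin n → ℂ),
    (∀ i, SchmidtRankLE k (ξ i)) ∧
    X = ∑ i, Matrix.of fun p q => ξ i p * star (ξ i q)}

/-- `k`-positive maps: the ampliation `1_{M_k} ⊗ φ` is a positive map. -/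
def IsKPos (k : ℕ) {m n : ℕ} (φ : MMap m n) : Prop :=
  ∀ X : Matrix (Fin k × Fin m) (Fin k × Fin m) ℂ, X.PosSemidef → (idTensor φ X).PosSemidef

/-- The transpose map as a linear map. -/
def tmap (m : ℕ) : MMap m m where
  toFun x := xᵀ
  map_add' x y := by simp [Matrix.transpose_add]
  map_smul' c x := by simp [Matrix.transpose_smul]

/-- Completely copositive maps: `CCP = {φ ∘ t : φ ∈ CP}`. -/
def CCPset (m : ℕ) : Set (MMap m m) := {χ | ∃ φ, IsCP φ ∧ χ = φ ∘ₗ tmap m}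

/-- PPT maps: `PPT = CP ∩ CCP`. -/
def PPTset (m : ℕ) : Set (MMap m m) := CPset m m ∩ CCPset m

/-- Decomposable maps: the convex hull of `CP` and `CCP`. -/
noncomputable def DECset (m : ℕ) : Set (MMap m m) := convexHull ℝ (CPset m m ∪ CCPset m)

/-- The cone `P_1` of positive maps. -/
def P1set (m n : ℕ) : Set (MMap m n) := {φ | IsPosMap φ}

/-- A right-mapping cone: a closed convex cone of positive (Hermitian-preserving) maps `L`
with `L ∘ CP_A ⊆ L`. -/
def IsRMC {m n : ℕ} (L : Set (MMap m n)) : Prop :=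
  L ⊆ HermSet m n ∧ (∀ φ ∈ L, IsPosMap φ) ∧ IsClosedConeSet L ∧
    compSet L (CPset m m) ⊆ L

/-- A left-mapping cone: a closed convex cone of positive (Hermitian-preserving) maps `L`
with `CP_B ∘ L ⊆ L`. -/
def IsLMC {m n : ℕ} (L : Set (MMap m n)) : Prop :=
  L ⊆ HermSet m n ∧ (∀ φ ∈ L, IsPosMap φ) ∧ IsClosedConeSet L ∧
    compSet (CPset n n) L ⊆ L

/-!
The forward implications hold because each ampliation is continuous and additive and sends a
product `x ⊗ y` of positive semidefinite matrices to another such product (completely positive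
maps and adjoints of positive maps are positive), hence maps `S₁` into the closed cones `S₁`
resp. of positive semidefinite matrices. For the converses, (1) and (3) are the case `ψ = id`.
For (2), if `ρ ∉ S₁`, Hahn–Banach gives a Hermitian `Y` with `⟨Y, x ⊗ y⟩ ≥ 0` for positive
semidefinite `x, y` but `⟨Y, ρ⟩ < 0`. Such a `Y` is the Choi matrix of a positive map `σ`, and
`⟨ξ, (1 ⊗ σ*)(ρ) ξ⟩ = ⟨Y, ρ⟩ < 0` for the maximally entangled vector `ξ`. Swapping the tensor
factors reduces (4) to (2).
-/

-- `Matrix` is a type synonym, so the instance for iterated function types is not found.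
instance {ι κ : Type*} : LocallyConvexSpace ℝ (Matrix ι κ ℂ) :=
  inferInstanceAs (LocallyConvexSpace ℝ (ι → κ → ℂ))

section Pairing

variable {ι : Type*} [Fintype ι]

lemma mpair_eq_sum (x y : Matrix ι ι ℂ) : mpair x y = ∑ p, ∑ q, x p q * y p q := by
  simp only [mpair, trace, Matrix.diag, mul_apply, transpose_apply]
  exact Finset.sum_comm

lemma mpair_sum_right {r : ℕ} (x : Matrix ι ι ℂ) (y : Fin r → Matrix ι ι ℂ) :
    mpair x (∑ i, y i) = ∑ i, mpair x (y i) := by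
  simp only [mpair, Matrix.mul_sum, trace_sum]

lemma star_dotProduct_mulVec_eq_mpair (A : Matrix ι ι ℂ) (w : ι → ℂ) :
    star w ⬝ᵥ A *ᵥ w = mpair A (vecMulVec (star w) w) := by
  simp only [mpair_eq_sum, dotProduct, mulVec, vecMulVec_apply, Finset.mul_sum]
  refine Finset.sum_congr rfl fun p _ => Finset.sum_congr rfl fun q _ => ?_
  ring

lemma mpair_nonneg {P Q : Matrix ι ι ℂ} (hP : P.PosSemidef) (hQ : Q.PosSemidef) :
    0 ≤ mpair P Q := by
  obtain ⟨r, v, rfl⟩ := posSemidef_iff_eq_sum_vecMulVec.mp hQ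
  rw [mpair_sum_right]
  refine Finset.sum_nonneg fun i _ => ?_
  have h := hP.dotProduct_mulVec_nonneg (star (v i))
  rwa [star_dotProduct_mulVec_eq_mpair, star_star] at h

lemma mpair_conjTranspose_of_isHermitian (B : Matrix ι ι ℂ) {X : Matrix ι ι ℂ}
    (hX : X.IsHermitian) : mpair Bᴴ X = star (mpair B X) := by
  simp only [mpair_eq_sum, star_sum, star_mul', conjTranspose_apply]
  rw [Finset.sum_comm]
  refine Finset.sum_congr rfl fun p _ => Finset.sum_congr rfl fun q _ => ?_
  rw [hX.apply q p]

variable [DecidableEq ι]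

/-- Over `ℂ`, a nonnegative quadratic form is automatically Hermitian. -/
lemma posSemidef_of_forall_star_dotProduct_mulVec_nonneg {A : Matrix ι ι ℂ}
    (h : ∀ w, 0 ≤ star w ⬝ᵥ A *ᵥ w) : A.PosSemidef := by
  rw [← isPositive_toEuclideanLin_iff, LinearMap.isPositive_iff_complex]
  intro x
  obtain ⟨hre, him⟩ := Complex.nonneg_iff.mp (h x.ofLp)
  simp only [toLpLin_apply, EuclideanSpace.inner_eq_star_dotProduct, dotProduct_star,
    dotProduct_comm (A *ᵥ _)]
  exact ⟨Complex.ext (by simp) (by simp [← him]), by simpa using hre⟩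

lemma LinearMap.apply_eq_mpair (ℓ : Matrix ι ι ℂ →ₗ[ℂ] ℂ) (X : Matrix ι ι ℂ) :
    ℓ X = mpair (of fun p q => ℓ (Matrix.single p q 1)) X := by
  conv_lhs => rw [matrix_eq_sum_single X]
  simp only [map_sum, mpair_eq_sum, of_apply]
  refine Finset.sum_congr rfl fun p _ => Finset.sum_congr rfl fun q _ => ?_
  have hsingle : Matrix.single p q (X p q) = X p q • Matrix.single p q 1 := by
    rw [smul_single, smul_eq_mul, mul_one]
  rw [hsingle, map_smul, smul_eq_mul, mul_comm]

lemma exists_mpair_eq_of_isHermitian (f : Module.Dual ℝ (Matrix ι ι ℂ)) :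
    ∃ Y : Matrix ι ι ℂ, ∀ X, X.IsHermitian → mpair Y X = f X := by
  set B := of fun p q => (f.extendRCLike (𝕜 := ℂ)) (single p q 1)
  refine ⟨(2⁻¹ : ℂ) • (B + Bᴴ), fun X hX => ?_⟩
  have hB : mpair B X = f.extendRCLike (𝕜 := ℂ) X := (LinearMap.apply_eq_mpair _ X).symm
  rw [mpair, transpose_smul, transpose_add, Matrix.smul_mul, Matrix.add_mul, trace_smul,
    trace_add, ← mpair, ← mpair, mpair_conjTranspose_of_isHermitian B hX, hB, smul_eq_mul,
    Complex.star_def, Complex.add_conj, ← f.re_extendRCLike_apply (𝕜 := ℂ) X,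
    RCLike.re_to_complex]
  push_cast
  ring

lemma isClosed_setOf_posSemidef :
    IsClosed {A : Matrix ι ι ℂ | A.PosSemidef} := by
  have h : {A : Matrix ι ι ℂ | A.PosSemidef} = ⋂ w, {A | 0 ≤ star w ⬝ᵥ A *ᵥ w} := by
    ext A
    simp only [Set.mem_ofPred_eq, Set.mem_iInter]
    exact ⟨fun hA => hA.dotProduct_mulVec_nonneg,
      posSemidef_of_forall_star_dotProduct_mulVec_nonneg⟩
  rw [h]
  exact isClosed_iInter fun w => isClosed_le continuous_const (by fun_prop)

def posSemidefAddSubmonoid (ι : Type*) [Fintype ι] : AddSubmonoid (Matrix ι ι ℂ) where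
  carrier := {A | A.PosSemidef}
  add_mem' := PosSemidef.add
  zero_mem' := PosSemidef.zero

end Pairing

section Choi

variable {m n : ℕ}

def ofChoi (Y : Matrix (Fin m × Fin n) (Fin m × Fin n) ℂ) : MMap m n where
  toFun x := of fun k l => ∑ i, ∑ j, x i j * Y (i, k) (j, l)
  map_add' x y := by
    ext k l
    simp [add_mul, Finset.sum_add_distrib]
  map_smul' c x := by
    ext k l
    simp [Finset.mul_sum, mul_assoc]

lemma ofChoi_apply (Y : Matrix (Fin m × Fin n) (Fin m × Fin n) ℂ) (x : Mat m) (k l : Fin n) :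
    ofChoi Y x k l = ∑ i, ∑ j, x i j * Y (i, k) (j, l) := rfl

lemma choi_ofChoi (Y : Matrix (Fin m × Fin n) (Fin m × Fin n) ℂ) : choi (ofChoi Y) = Y := by
  ext p q
  simp [choi, ofChoi_apply, single_apply, ite_and]

lemma ofChoi_choi (φ : MMap m n) : ofChoi (choi φ) = φ :=
  Matrix.ext_linearMap ℂ fun i j => LinearMap.ext_ring <| by
    ext k l
    simp [ofChoi_apply, choi, single_apply, ite_and]

lemma mpair_ofChoi (Y : Matrix (Fin m × Fin n) (Fin m × Fin n) ℂ) (x : Mat m) (z : Mat n) :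
    mpair (ofChoi Y x) z = mpair Y (x ⊗ₖ z) := by
  simp only [mpair_eq_sum, ofChoi_apply, Fintype.sum_prod_type, kroneckerMap_apply,
    Finset.sum_mul]
  -- commuting every `Fin n`-sum past a `Fin m`-sum puts both sides in the same summation order
  simp only [Finset.sum_comm (s := (univ : Finset (Fin n))) (t := (univ : Finset (Fin m)))]
  simp only [mul_assoc, mul_comm, mul_left_comm]

lemma mpair_adjMap (σ : MMap m n) (y : Mat n) (x : Mat m) :
    mpair (adjMap σ y) x = mpair (choi σ) (x ⊗ₖ y) := by
  simp only [mpair_eq_sum, adjMap, LinearMap.coe_mk, AddHom.coe_mk, of_apply, choi,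
    Fintype.sum_prod_type, kroneckerMap_apply, Finset.sum_mul]
  simp only [Finset.sum_comm (s := (univ : Finset (Fin n))) (t := (univ : Finset (Fin m)))]
  simp only [mul_assoc, mul_comm, mul_left_comm]

lemma isPosMap_ofChoi {Y : Matrix (Fin m × Fin n) (Fin m × Fin n) ℂ}
    (hY : ∀ x y, x.PosSemidef → y.PosSemidef → 0 ≤ mpair Y (x ⊗ₖ y)) :
    IsPosMap (ofChoi Y) := fun x hx =>
  posSemidef_of_forall_star_dotProduct_mulVec_nonneg fun w => by
    rw [star_dotProduct_mulVec_eq_mpair, mpair_ofChoi]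
    exact hY _ _ hx (posSemidef_vecMulVec_star_self w)

lemma IsCP.isPosMap {ψ : MMap m n} (hψ : IsCP ψ) : IsPosMap ψ :=
  ofChoi_choi ψ ▸ isPosMap_ofChoi fun _ _ hx hy => mpair_nonneg hψ (hx.kronecker hy)

lemma IsPosMap.adjMap {σ : MMap m n} (hσ : IsPosMap σ) : IsPosMap (adjMap σ) := fun y hy =>
  posSemidef_of_forall_star_dotProduct_mulVec_nonneg fun w => by
    rw [star_dotProduct_mulVec_eq_mpair, mpair_adjMap, ← mpair_ofChoi, ofChoi_choi]
    exact mpair_nonneg (hσ _ (posSemidef_vecMulVec_star_self w)) hy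

end Choi

section MaxEntangled

variable {m n : ℕ}

def maxEntangled (m : ℕ) : Fin m × Fin m → ℂ := fun p => if p.1 = p.2 then 1 else 0

lemma choi_id : choi (LinearMap.id : MMap m m) =
    vecMulVec (maxEntangled m) (star (maxEntangled m)) := by
  ext p q
  simp [choi, maxEntangled, vecMulVec_apply, single_apply, ← ite_and, and_comm]

lemma isCP_id : IsCP (LinearMap.id : MMap m m) := by
  rw [IsCP, choi_id]
  exact posSemidef_vecMulVec_self_star _

lemma star_maxEntangled_dotProduct_mulVec (M : Matrix (Fin m × Fin m) (Fin m × Fin m) ℂ) :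
    star (maxEntangled m) ⬝ᵥ M *ᵥ maxEntangled m = ∑ i, ∑ j, M (i, i) (j, j) := by
  simp [dotProduct, mulVec, maxEntangled, Fintype.sum_prod_type]

lemma star_maxEntangled_dotProduct_idTensor_adjMap (σ : MMap m n)
    (ρ : Matrix (Fin m × Fin n) (Fin m × Fin n) ℂ) :
    star (maxEntangled m) ⬝ᵥ idTensor (adjMap σ) ρ *ᵥ maxEntangled m = mpair (choi σ) ρ := by
  simp only [star_maxEntangled_dotProduct_mulVec, idTensor, adjMap, LinearMap.coe_mk,
    AddHom.coe_mk, of_apply, mpair_eq_sum, choi, Fintype.sum_prod_type]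
  simp only [Finset.sum_comm (s := (univ : Finset (Fin m))) (t := (univ : Finset (Fin n)))]

end MaxEntangled

section Ampliation

variable {x y z : ℕ}

def idTensorₗ (σ : MMap x y) :
    Matrix (Fin z × Fin x) (Fin z × Fin x) ℂ →ₗ[ℂ] Matrix (Fin z × Fin y) (Fin z × Fin y) ℂ where
  toFun := idTensor σ
  map_add' M N := by
    ext p q
    exact congr_fun₂ (map_add σ (M.submatrix (p.1, ·) (q.1, ·)) (N.submatrix _ _)) p.2 q.2
  map_smul' c M := by
    ext p q
    exact congr_fun₂ (map_smul σ c (M.submatrix (p.1, ·) (q.1, ·))) p.2 q.2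

def tensorIdₗ (σ : MMap x y) :
    Matrix (Fin x × Fin z) (Fin x × Fin z) ℂ →ₗ[ℂ] Matrix (Fin y × Fin z) (Fin y × Fin z) ℂ where
  toFun := tensorId σ
  map_add' M N := by
    ext p q
    exact congr_fun₂ (map_add σ (M.submatrix (·, p.2) (·, q.2)) (N.submatrix _ _)) p.1 q.1
  map_smul' c M := by
    ext p q
    exact congr_fun₂ (map_smul σ c (M.submatrix (·, p.2) (·, q.2))) p.1 q.1

lemma idTensor_kronecker (σ : MMap x y) (A : Mat z) (B : Mat x) :
    idTensor σ (A ⊗ₖ B) = A ⊗ₖ σ B := by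
  ext p q
  have hblock : (A ⊗ₖ B).submatrix (p.1, ·) (q.1, ·) = A p.1 q.1 • B := by
    ext k l
    simp [kroneckerMap_apply]
  exact congr_fun₂ ((congrArg σ hblock).trans (map_smul σ _ B)) p.2 q.2

lemma tensorId_kronecker (σ : MMap x y) (A : Mat x) (B : Mat z) :
    tensorId σ (A ⊗ₖ B) = σ A ⊗ₖ B := by
  ext p q
  have hblock : (A ⊗ₖ B).submatrix (·, p.2) (·, q.2) = B p.2 q.2 • A := by
    ext i j
    simp [kroneckerMap_apply, mul_comm]
  exact (congr_fun₂ ((congrArg σ hblock).trans (map_smul σ _ A)) p.1 q.1).trans (mul_comm _ _)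

lemma idTensor_submatrix_swap (σ : MMap x y) (ρ : Matrix (Fin x × Fin z) (Fin x × Fin z) ℂ) :
    idTensor σ (ρ.submatrix Prod.swap Prod.swap) = (tensorId σ ρ).submatrix Prod.swap Prod.swap :=
  rfl

end Ampliation

section Separable

variable {m n : ℕ}

def sepPointedCone (m n : ℕ) : PointedCone ℝ (Matrix (Fin m × Fin n) (Fin m × Fin n) ℂ) where
  carrier := {X | ∃ (r : ℕ) (x : Fin r → Mat m) (y : Fin r → Mat n),
    (∀ i, (x i).PosSemidef ∧ (y i).PosSemidef) ∧ X = ∑ i, x i ⊗ₖ y i}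
  zero_mem' := ⟨0, Fin.elim0, Fin.elim0, fun i => i.elim0, by simp⟩
  add_mem' := by
    rintro _ _ ⟨r, x, y, hxy, rfl⟩ ⟨r', x', y', hxy', rfl⟩
    refine ⟨r + r', Fin.append x x', Fin.append y y', fun i => ?_, by simp [Fin.sum_univ_add]⟩
    exact Fin.addCases (fun i => by simpa using hxy i) (fun i => by simpa using hxy' i) i
  smul_mem' := by
    rintro ⟨c, hc⟩ _ ⟨r, x, y, hxy, rfl⟩
    refine ⟨r, fun i => c • x i, y, fun i => ⟨(hxy i).1.smul hc, (hxy i).2⟩, ?_⟩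
    simp [Finset.smul_sum, smul_kronecker]

noncomputable def sepProperCone (m n : ℕ) :
    ProperCone ℝ (Matrix (Fin m × Fin n) (Fin m × Fin n) ℂ) :=
  ⟨(sepPointedCone m n).closure, isClosed_closure⟩

lemma kronecker_mem_sepCone {x : Mat m} {y : Mat n} (hx : x.PosSemidef) (hy : y.PosSemidef) :
    x ⊗ₖ y ∈ SepCone m n :=
  subset_closure ⟨1, fun _ => x, fun _ => y, fun _ => ⟨hx, hy⟩, by simp⟩

lemma map_mem_of_mem_sepCone {F : Type*} [AddCommMonoid F] [TopologicalSpace F]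
    (T : Matrix (Fin m × Fin n) (Fin m × Fin n) ℂ →+ F) (hT : Continuous T)
    {C : AddSubmonoid F} (hC : IsClosed (C : Set F))
    (hTC : ∀ x y, x.PosSemidef → y.PosSemidef → T (x ⊗ₖ y) ∈ C)
    {ρ : Matrix (Fin m × Fin n) (Fin m × Fin n) ℂ} (hρ : ρ ∈ SepCone m n) : T ρ ∈ C := by
  refine hC.closure_subset (map_mem_closure hT hρ ?_)
  rintro _ ⟨r, x, y, hxy, rfl⟩
  rw [map_sum]
  exact C.sum_mem fun i _ => hTC _ _ (hxy i).1 (hxy i).2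

variable {k : ℕ} {ρ : Matrix (Fin m × Fin n) (Fin m × Fin n) ℂ}

lemma tensorId_mem_sepCone {ψ : MMap m k} (hψ : IsPosMap ψ) (hρ : ρ ∈ SepCone m n) :
    tensorId ψ ρ ∈ SepCone k n :=
  map_mem_of_mem_sepCone (tensorIdₗ ψ).toAddMonoidHom
    (tensorIdₗ ψ).continuous_of_finiteDimensional (sepProperCone k n).isClosed
    (fun x y hx hy => show tensorId ψ (x ⊗ₖ y) ∈ SepCone k n by
      rw [tensorId_kronecker]
      exact kronecker_mem_sepCone (hψ x hx) hy) hρ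

lemma idTensor_mem_sepCone {ψ : MMap n k} (hψ : IsPosMap ψ) (hρ : ρ ∈ SepCone m n) :
    idTensor ψ ρ ∈ SepCone m k :=
  map_mem_of_mem_sepCone (idTensorₗ ψ).toAddMonoidHom
    (idTensorₗ ψ).continuous_of_finiteDimensional (sepProperCone m k).isClosed
    (fun x y hx hy => show idTensor ψ (x ⊗ₖ y) ∈ SepCone m k by
      rw [idTensor_kronecker]
      exact kronecker_mem_sepCone hx (hψ y hy)) hρ

lemma posSemidef_tensorId_of_mem_sepCone {σ : MMap m k} (hσ : IsPosMap σ)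
    (hρ : ρ ∈ SepCone m n) : (tensorId σ ρ).PosSemidef :=
  map_mem_of_mem_sepCone (C := posSemidefAddSubmonoid _) (tensorIdₗ σ).toAddMonoidHom
    (tensorIdₗ σ).continuous_of_finiteDimensional isClosed_setOf_posSemidef
    (fun x y hx hy => show (tensorId σ (x ⊗ₖ y)).PosSemidef by
      rw [tensorId_kronecker]
      exact (hσ x hx).kronecker hy) hρ

lemma posSemidef_idTensor_of_mem_sepCone {σ : MMap n k} (hσ : IsPosMap σ)
    (hρ : ρ ∈ SepCone m n) : (idTensor σ ρ).PosSemidef :=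
  map_mem_of_mem_sepCone (C := posSemidefAddSubmonoid _) (idTensorₗ σ).toAddMonoidHom
    (idTensorₗ σ).continuous_of_finiteDimensional isClosed_setOf_posSemidef
    (fun x y hx hy => show (idTensor σ (x ⊗ₖ y)).PosSemidef by
      rw [idTensor_kronecker]
      exact hx.kronecker (hσ y hy)) hρ

lemma submatrix_swap_mem_sepCone (hρ : ρ ∈ SepCone m n) :
    ρ.submatrix Prod.swap Prod.swap ∈ SepCone n m :=
  map_mem_of_mem_sepCone
    (AddMonoidHom.mk' (fun M => M.submatrix Prod.swap Prod.swap) fun _ _ => rfl)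
    (continuous_id.matrix_submatrix _ _) (sepProperCone n m).isClosed
    (fun x y hx hy => show (x ⊗ₖ y).submatrix Prod.swap Prod.swap ∈ SepCone n m by
      convert kronecker_mem_sepCone hy hx using 1
      ext p q
      exact mul_comm _ _) hρ

end Separable

section Horodecki

variable {m n : ℕ} {ρ : Matrix (Fin m × Fin n) (Fin m × Fin n) ℂ}

theorem mem_sepCone_of_forall_isPosMap (hρ : ρ.IsHermitian)
    (h : ∀ σ : MMap m n, IsPosMap σ → (idTensor (adjMap σ) ρ).PosSemidef) :
    ρ ∈ SepCone m n := by
  by_contra hρS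
  obtain ⟨f, hf, hfρ⟩ := (sepProperCone m n).hyperplane_separation_point hρS
  obtain ⟨Y, hY⟩ := exists_mpair_eq_of_isHermitian f.toLinearMap
  have hσ : IsPosMap (ofChoi Y) := isPosMap_ofChoi fun x y hx hy => by
    rw [hY _ (hx.kronecker hy).isHermitian]
    exact Complex.zero_le_real.mpr (hf _ (kronecker_mem_sepCone hx hy))
  have hρY := (h _ hσ).dotProduct_mulVec_nonneg (maxEntangled m)
  rw [star_maxEntangled_dotProduct_idTensor_adjMap, choi_ofChoi, hY ρ hρ] at hρY
  exact hfρ.not_ge (Complex.zero_le_real.mp hρY)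

theorem mem_sepCone_of_forall_isPosMap_tensorId (hρ : ρ.IsHermitian)
    (h : ∀ σ : MMap m n, IsPosMap σ → (tensorId σ ρ).PosSemidef) : ρ ∈ SepCone m n :=
  submatrix_swap_mem_sepCone <| mem_sepCone_of_forall_isPosMap (hρ.submatrix Prod.swap)
    fun σ hσ => by
      rw [idTensor_submatrix_swap]
      exact (h _ hσ.adjMap).submatrix Prod.swap

end Horodecki

/-- ampliation characterizations of separability of a state. -/
theorem stmt18 {a : ℕ} (ρ : Matrix (Fin a × Fin a) (Fin a × Fin a) ℂ)
    (hρ : ρ.PosSemidef) :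
    (ρ ∈ SepCone a a ↔ ∀ ψ : MMap a a, IsCP ψ → tensorId ψ ρ ∈ SepCone a a) ∧
    (ρ ∈ SepCone a a ↔ ∀ σ : MMap a a, IsPosMap σ → (idTensor (adjMap σ) ρ).PosSemidef) ∧
    (ρ ∈ SepCone a a ↔ ∀ ψ : MMap a a, IsCP ψ → idTensor ψ ρ ∈ SepCone a a) ∧
    (ρ ∈ SepCone a a ↔ ∀ σ : MMap a a, IsPosMap σ → (tensorId σ ρ).PosSemidef) :=
  ⟨⟨fun hs _ hψ => tensorId_mem_sepCone hψ.isPosMap hs, fun h => h _ isCP_id⟩,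
    ⟨fun hs _ hσ => posSemidef_idTensor_of_mem_sepCone hσ.adjMap hs,
      mem_sepCone_of_forall_isPosMap hρ.isHermitian⟩,
    ⟨fun hs _ hψ => idTensor_mem_sepCone hψ.isPosMap hs, fun h => h _ isCP_id⟩,
    ⟨fun hs _ hσ => posSemidef_tensorId_of_mem_sepCone hσ hs,
      mem_sepCone_of_forall_isPosMap_tensorId hρ.isHermitian⟩⟩
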